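/- arXiv:1204.2924 — 5 statements merged into one kernel-verified Lean document; each statement's English description precedes it below -/
import Mathlib

section
/- For every ϱ > 0, the operator mapping f to the function t ↦ ∫_{-∞}^t f(s) ds is a bounded linear operator on the weighted space H_{ϱ,0}(ℝ) = {f ∈ L²_loc(ℝ) : (x ↦ e^{-ϱx} f(x)) ∈ L²(ℝ)} with operator norm exactly 1/ϱ. -/
open MeasureTheory Real Set

/-- Squared weighted norm integrand total: `∫ ‖f t‖² e^{-2ϱt} dt`. -/
noncomputable def wInt (ϱ : ℝ) {H : Type*} [NormedAddCommGroup H] (f : ℝ → H) : ℝ :=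
  ∫ t : ℝ, ‖f t‖ ^ 2 * Real.exp (-2 * ϱ * t)

/-- Membership in the weighted space `H_{ϱ,0}(ℝ; H)`. -/
def memW (ϱ : ℝ) {H : Type*} [NormedAddCommGroup H] (f : ℝ → H) : Prop :=
  AEStronglyMeasurable f volume ∧
    Integrable (fun t : ℝ => ‖f t‖ ^ 2 * Real.exp (-2 * ϱ * t))

/-- The weighted norm `|f|_{ϱ,0}`. -/
noncomputable def wNorm (ϱ : ℝ) {H : Type*} [NormedAddCommGroup H] (f : ℝ → H) : ℝ :=
  Real.sqrt (wInt ϱ f)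

/-- Integration from -infinity: the inverse of the time derivative. -/
noncomputable def intOp (f : ℝ → ℂ) : ℝ → ℂ := fun t => ∫ s in Set.Iio t, f s


/-!
By Cauchy–Schwarz with the weights `e^{∓ϱs}`,
`|∫_{-∞}^t f|² ≤ (e^{ϱt}/ϱ) ∫_{s<t} |f s|² e^{-ϱs} ds`; multiplying by `e^{-2ϱt}`, integrating
in `t` and swapping the integrals (`∫_{t>s} e^{-ϱt} dt = e^{-ϱs}/ϱ`) gives
`|intOp f|²_{ϱ,0} ≤ ϱ⁻² |f|²_{ϱ,0}`. The estimates are carried out for the lower Lebesgue integral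
`wLInt`, so that integrability only has to be read off at the end.

The constant is sharp: for `μ > ϱ`, `intOp` maps `e^{μs} 1_{s<0}` to `e^{μs}/μ` on `s < 0`, so the
norm ratio is at least `1/μ`, which tends to `1/ϱ` as `μ ↓ ϱ`.
-/

open scoped ENNReal

section ExpIntegrals

variable {a : ℝ}

theorem lintegral_Iio_exp_mul (ha : 0 < a) (c : ℝ) :
    ∫⁻ s in Iio c, ENNReal.ofReal (exp (a * s)) = ENNReal.ofReal (exp (a * c) / a) := by
  rw [← ofReal_integral_eq_lintegral_ofReal
    ((integrableOn_exp_mul_Iic ha c).mono_set Iio_subset_Iic_self)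
    (ae_of_all _ fun _ => (exp_pos _).le), ← integral_Iic_eq_integral_Iio,
    integral_exp_mul_Iic ha]

theorem lintegral_Ioi_exp_neg_mul (ha : 0 < a) (c : ℝ) :
    ∫⁻ s in Ioi c, ENNReal.ofReal (exp (-a * s)) = ENNReal.ofReal (exp (-a * c) / a) := by
  rw [← ofReal_integral_eq_lintegral_ofReal (exp_neg_integrableOn_Ioi c ha)
    (ae_of_all _ fun _ => (exp_pos _).le), integral_exp_mul_Ioi (neg_lt_zero.2 ha),
    neg_div_neg_eq]

end ExpIntegrals

theorem sq_lintegral_sqrt_mul_le {α : Type*} [MeasurableSpace α] {μ : Measure α}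
    {f g : α → ℝ≥0∞} (hf : AEMeasurable f μ) (hg : AEMeasurable g μ) :
    (∫⁻ a, (f a * g a) ^ (2⁻¹ : ℝ) ∂μ) ^ 2 ≤ (∫⁻ a, f a ∂μ) * ∫⁻ a, g a ∂μ := by
  have holder := ENNReal.lintegral_mul_norm_pow_le hf hg (p := 2⁻¹) (q := 2⁻¹) (by norm_num)
    (by norm_num) (by norm_num)
  simp_rw [← ENNReal.mul_rpow_of_nonneg _ _ (by norm_num : (0 : ℝ) ≤ 2⁻¹)] at holder
  calc (∫⁻ a, (f a * g a) ^ (2⁻¹ : ℝ) ∂μ) ^ 2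
      ≤ (((∫⁻ a, f a ∂μ) * ∫⁻ a, g a ∂μ) ^ ((2 : ℕ)⁻¹ : ℝ)) ^ 2 := by
        gcongr; exact_mod_cast holder
    _ = (∫⁻ a, f a ∂μ) * ∫⁻ a, g a ∂μ := ENNReal.rpow_inv_natCast_pow two_ne_zero _

theorem lintegral_mul_setLIntegral_Iio {w G : ℝ → ℝ≥0∞} (hw : AEMeasurable w)
    (hG : AEMeasurable G) :
    ∫⁻ t, w t * ∫⁻ s in Iio t, G s = ∫⁻ s, G s * ∫⁻ t in Ioi s, w t := by
  set F : ℝ × ℝ → ℝ≥0∞ := {p | p.2 < p.1}.indicator fun p => w p.1 * G p.2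
  have hF : AEMeasurable F (volume.prod volume) :=
    (hw.comp_fst.mul hG.comp_snd).indicator (measurableSet_lt measurable_snd measurable_fst)
  have left (t : ℝ) : w t * ∫⁻ s in Iio t, G s = ∫⁻ s, F (t, s) := by
    rw [← lintegral_const_mul'' _ hG.restrict, ← lintegral_indicator measurableSet_Iio]
    rfl
  have right (s : ℝ) : G s * ∫⁻ t in Ioi s, w t = ∫⁻ t, F (t, s) := by
    rw [← lintegral_const_mul'' _ hw.restrict, ← lintegral_indicator measurableSet_Ioi]
    congr 1 with t
    by_cases hs : s < t <;> simp [F, hs, mul_comm]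
  simp_rw [left, right]
  exact lintegral_lintegral_swap (f := fun t s => F (t, s)) hF

noncomputable def wLInt (ϱ : ℝ) {H : Type*} [NormedAddCommGroup H] (f : ℝ → H) : ℝ≥0∞ :=
  ∫⁻ t, ‖f t‖ₑ ^ 2 * ENNReal.ofReal (exp (-2 * ϱ * t))

section WeightedNorm

variable {ϱ : ℝ} {H : Type*} [NormedAddCommGroup H] {f : ℝ → H}

theorem ofReal_norm_sq_mul_exp (x : H) (r : ℝ) :
    ENNReal.ofReal (‖x‖ ^ 2 * exp r) = ‖x‖ₑ ^ 2 * ENNReal.ofReal (exp r) := by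
  rw [ENNReal.ofReal_mul (by positivity), ENNReal.ofReal_pow (norm_nonneg _),
    ofReal_norm]

theorem memW_iff : memW ϱ f ↔ AEStronglyMeasurable f ∧ wLInt ϱ f < ∞ := by
  refine and_congr_right fun hf => ?_
  rw [Integrable, and_iff_right (by fun_prop),
    hasFiniteIntegral_iff_ofReal (ae_of_all _ fun _ => by positivity)]
  simp only [ofReal_norm_sq_mul_exp, wLInt]

theorem wNorm_eq (hf : AEStronglyMeasurable f) : wNorm ϱ f = √(wLInt ϱ f).toReal := by
  rw [wNorm, wInt, integral_eq_lintegral_of_nonneg_ae (ae_of_all _ fun _ => by positivity)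
    (by fun_prop)]
  simp only [ofReal_norm_sq_mul_exp, wLInt]

end WeightedNorm

theorem sqrt_toReal_ofReal_sq_mul {c : ℝ} (hc : 0 ≤ c) (x : ℝ≥0∞) :
    √(ENNReal.ofReal c ^ 2 * x).toReal = c * √x.toReal := by
  rw [ENNReal.toReal_mul, ENNReal.toReal_pow, ENNReal.toReal_ofReal hc,
    Real.sqrt_mul (by positivity), Real.sqrt_sq hc]

theorem sq_lintegral_Iio_enorm_le {E : Type*} [NormedAddCommGroup E] {f : ℝ → E}
    (hf : AEStronglyMeasurable f) {a : ℝ} (ha : 0 < a) (t : ℝ) :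
    (∫⁻ s in Iio t, ‖f s‖ₑ) ^ 2 ≤ (∫⁻ s in Iio t, ‖f s‖ₑ ^ 2 * ENNReal.ofReal (exp (-a * s))) *
      ENNReal.ofReal (exp (a * t) / a) := by
  have split (s : ℝ) : ‖f s‖ₑ =
      (‖f s‖ₑ ^ 2 * ENNReal.ofReal (exp (-a * s)) * ENNReal.ofReal (exp (a * s))) ^ (2⁻¹ : ℝ) := by
    rw [mul_assoc, ← ENNReal.ofReal_mul (exp_pos _).le, ← exp_add, neg_mul, neg_add_cancel,
      exp_zero, ENNReal.ofReal_one, mul_one]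
    exact_mod_cast (ENNReal.pow_rpow_inv_natCast two_ne_zero _).symm
  calc (∫⁻ s in Iio t, ‖f s‖ₑ) ^ 2
      = (∫⁻ s in Iio t, (‖f s‖ₑ ^ 2 * ENNReal.ofReal (exp (-a * s)) *
          ENNReal.ofReal (exp (a * s))) ^ (2⁻¹ : ℝ)) ^ 2 := by simp only [← split]
    _ ≤ _ := by
        rw [← lintegral_Iio_exp_mul ha]
        exact sq_lintegral_sqrt_mul_le (by fun_prop) (by fun_prop)

theorem memW.integrableOn {ϱ : ℝ} (hϱ : 0 < ϱ) {H : Type*} [NormedAddCommGroup H]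
    {f : ℝ → H} (hf : memW ϱ f) (t : ℝ) : IntegrableOn f (Iio t) := by
  refine ⟨hf.1.restrict, ?_⟩
  have bound := sq_lintegral_Iio_enorm_le hf.1 (mul_pos two_pos hϱ) t
  have tail : ∫⁻ s in Iio t, ‖f s‖ₑ ^ 2 * ENNReal.ofReal (exp (-(2 * ϱ) * s)) ≤ wLInt ϱ f := by
    rw [wLInt]; simp only [neg_mul]; exact setLIntegral_le_lintegral _ _
  have finite := (bound.trans (mul_le_mul_left tail _)).trans_lt
    (ENNReal.mul_lt_top (memW_iff.1 hf).2 ENNReal.ofReal_lt_top)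
  simpa [HasFiniteIntegral, ENNReal.pow_lt_top_iff] using finite

theorem aestronglyMeasurable_intOp {f : ℝ → ℂ} (hf : AEStronglyMeasurable f) :
    AEStronglyMeasurable (intOp f) := by
  have hF : AEStronglyMeasurable (fun p : ℝ × ℝ => {p : ℝ × ℝ | p.2 < p.1}.indicator
      (fun p => f p.2) p) (volume.prod volume) :=
    hf.comp_snd.indicator (measurableSet_lt measurable_snd measurable_fst)
  refine hF.integral_prod_right'.congr (ae_of_all _ fun t => ?_)
  rw [intOp, ← integral_indicator measurableSet_Iio]
  rfl

theorem wLInt_intOp_le {ϱ : ℝ} (hϱ : 0 < ϱ) {f : ℝ → ℂ} (hf : AEStronglyMeasurable f) :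
    wLInt ϱ (intOp f) ≤ ENNReal.ofReal ϱ⁻¹ ^ 2 * wLInt ϱ f := by
  set G : ℝ → ℝ≥0∞ := fun s => ‖f s‖ₑ ^ 2 * ENNReal.ofReal (exp (-ϱ * s))
  have weights (t : ℝ) : ENNReal.ofReal (exp (ϱ * t) / ϱ) * ENNReal.ofReal (exp (-2 * ϱ * t)) =
      ENNReal.ofReal ϱ⁻¹ * ENNReal.ofReal (exp (-ϱ * t)) := by
    rw [← ENNReal.ofReal_mul (by positivity), ← ENNReal.ofReal_mul (by positivity),
      div_mul_eq_mul_div, ← exp_add, div_eq_inv_mul]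
    ring_nf
  have pointwise (t : ℝ) : ‖intOp f t‖ₑ ^ 2 * ENNReal.ofReal (exp (-2 * ϱ * t)) ≤
      ENNReal.ofReal ϱ⁻¹ * (ENNReal.ofReal (exp (-ϱ * t)) * ∫⁻ s in Iio t, G s) := by
    calc _ ≤ (∫⁻ s in Iio t, G s) * ENNReal.ofReal (exp (ϱ * t) / ϱ) *
          ENNReal.ofReal (exp (-2 * ϱ * t)) := by
          gcongr
          exact (pow_le_pow_left' (enorm_integral_le_lintegral_enorm f) 2).trans
            (sq_lintegral_Iio_enorm_le hf hϱ t)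
      _ = _ := by rw [mul_assoc, weights]; ring
  have inner (s : ℝ) : G s * ∫⁻ t in Ioi s, ENNReal.ofReal (exp (-ϱ * t)) =
      ENNReal.ofReal ϱ⁻¹ * (‖f s‖ₑ ^ 2 * ENNReal.ofReal (exp (-2 * ϱ * s))) := by
    rw [lintegral_Ioi_exp_neg_mul hϱ, mul_assoc, ← ENNReal.ofReal_mul (by positivity),
      show exp (-ϱ * s) * (exp (-ϱ * s) / ϱ) = ϱ⁻¹ * exp (-2 * ϱ * s) by
        rw [← mul_div_assoc, ← exp_add, div_eq_inv_mul]; ring_nf,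
      ENNReal.ofReal_mul (by positivity)]
    ring
  calc wLInt ϱ (intOp f)
      ≤ ∫⁻ t, ENNReal.ofReal ϱ⁻¹ * (ENNReal.ofReal (exp (-ϱ * t)) * ∫⁻ s in Iio t, G s) :=
        lintegral_mono pointwise
    _ = ENNReal.ofReal ϱ⁻¹ * ∫⁻ s, G s * ∫⁻ t in Ioi s, ENNReal.ofReal (exp (-ϱ * t)) := by
        rw [lintegral_const_mul' _ _ ENNReal.ofReal_ne_top,
          lintegral_mul_setLIntegral_Iio (by fun_prop) (by fun_prop)]
    _ = ENNReal.ofReal ϱ⁻¹ ^ 2 * wLInt ϱ f := by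
        simp_rw [inner]
        rw [lintegral_const_mul' _ _ ENNReal.ofReal_ne_top, wLInt]
        ring

section Bounded

variable {ϱ : ℝ} {f : ℝ → ℂ}

theorem memW_intOp (hϱ : 0 < ϱ) (hf : memW ϱ f) : memW ϱ (intOp f) :=
  memW_iff.2 ⟨aestronglyMeasurable_intOp hf.1, (wLInt_intOp_le hϱ hf.1).trans_lt
    (ENNReal.mul_lt_top (by simp) (memW_iff.1 hf).2)⟩

theorem wNorm_intOp_le (hϱ : 0 < ϱ) (hf : memW ϱ f) : wNorm ϱ (intOp f) ≤ 1 / ϱ * wNorm ϱ f := by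
  rw [wNorm_eq (aestronglyMeasurable_intOp hf.1), wNorm_eq hf.1, one_div,
    ← sqrt_toReal_ofReal_sq_mul (inv_nonneg.2 hϱ.le)]
  exact Real.sqrt_le_sqrt (ENNReal.toReal_mono (ENNReal.mul_ne_top (by simp)
    (memW_iff.1 hf).2.ne) (wLInt_intOp_le hϱ hf.1))

end Bounded

noncomputable def expCut (μ : ℝ) : ℝ → ℂ := (Iio 0).indicator fun s => ((exp (μ * s) : ℝ) : ℂ)

section ExpCut

variable {ϱ μ : ℝ}

theorem aestronglyMeasurable_expCut : AEStronglyMeasurable (expCut μ) :=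
  (Measurable.indicator (by fun_prop) measurableSet_Iio).aestronglyMeasurable

theorem intOp_expCut_of_neg (hμ : 0 < μ) {t : ℝ} (ht : t < 0) :
    intOp (expCut μ) t = (μ : ℂ)⁻¹ * expCut μ t := by
  have on_Iio : ∫ s in Iio t, expCut μ s = ∫ s in Iio t, ((exp (μ * s) : ℝ) : ℂ) :=
    setIntegral_congr_fun measurableSet_Iio fun s hs => indicator_of_mem (lt_trans hs ht) _
  rw [intOp, on_Iio, integral_complex_ofReal, ← integral_Iic_eq_integral_Iio,
    integral_exp_mul_Iic hμ, expCut, indicator_of_mem (mem_Iio.2 ht)]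
  push_cast
  ring

theorem wLInt_expCut (hμ : ϱ < μ) : wLInt ϱ (expCut μ) = ENNReal.ofReal (2 * (μ - ϱ))⁻¹ := by
  have integrand (t : ℝ) : ‖expCut μ t‖ₑ ^ 2 * ENNReal.ofReal (exp (-2 * ϱ * t)) =
      (Iio 0).indicator (fun t => ENNReal.ofReal (exp (2 * (μ - ϱ) * t))) t := by
    by_cases ht : t ∈ Iio 0
    · rw [expCut, indicator_of_mem ht, indicator_of_mem ht, ← ofReal_norm_sq_mul_exp,
        Complex.norm_real, norm_of_nonneg (exp_pos _).le, sq, ← exp_add, ← exp_add]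
      ring_nf
    · simp [expCut, ht]
  rw [wLInt, lintegral_congr integrand, lintegral_indicator measurableSet_Iio,
    lintegral_Iio_exp_mul (by linarith), mul_zero, exp_zero, one_div]

theorem le_wLInt_intOp_expCut (hμ : 0 < μ) :
    ENNReal.ofReal μ⁻¹ ^ 2 * wLInt ϱ (expCut μ) ≤ wLInt ϱ (intOp (expCut μ)) := by
  have support : (fun t => ‖expCut μ t‖ₑ ^ 2 * ENNReal.ofReal (exp (-2 * ϱ * t))).support ⊆
      Iio 0 := fun t ht => by
    by_contra h
    simp [expCut, h] at ht
  have on_Iio (t : ℝ) (ht : t ∈ Iio 0) :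
      ENNReal.ofReal μ⁻¹ ^ 2 * (‖expCut μ t‖ₑ ^ 2 * ENNReal.ofReal (exp (-2 * ϱ * t))) =
        ‖intOp (expCut μ) t‖ₑ ^ 2 * ENNReal.ofReal (exp (-2 * ϱ * t)) := by
    rw [intOp_expCut_of_neg hμ ht, enorm_mul, ← Complex.ofReal_inv,
      ← ofReal_norm ((μ⁻¹ : ℝ) : ℂ), Complex.norm_real, norm_of_nonneg (inv_nonneg.2 hμ.le)]
    ring
  calc ENNReal.ofReal μ⁻¹ ^ 2 * wLInt ϱ (expCut μ)
      = ∫⁻ t in Iio 0, ENNReal.ofReal μ⁻¹ ^ 2 *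
          (‖expCut μ t‖ₑ ^ 2 * ENNReal.ofReal (exp (-2 * ϱ * t))) := by
        rw [lintegral_const_mul' _ _ (by simp), wLInt, setLIntegral_eq_of_support_subset support]
    _ = ∫⁻ t in Iio 0, ‖intOp (expCut μ) t‖ₑ ^ 2 * ENNReal.ofReal (exp (-2 * ϱ * t)) :=
        setLIntegral_congr_fun measurableSet_Iio on_Iio
    _ ≤ wLInt ϱ (intOp (expCut μ)) := setLIntegral_le_lintegral _ _

end ExpCut

theorem exists_lt_wNorm_intOp {ϱ : ℝ} (hϱ : 0 < ϱ) {c : ℝ} (hc0 : 0 ≤ c) (hc : c < 1 / ϱ) :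
    ∃ f : ℝ → ℂ, memW ϱ f ∧ c * wNorm ϱ f < wNorm ϱ (intOp f) := by
  obtain ⟨r, hcr, hrϱ⟩ := exists_between hc
  have hr : 0 < r := hc0.trans_lt hcr
  have hμ : ϱ < r⁻¹ := (lt_inv_comm₀ hr hϱ).1 (by rwa [one_div] at hrϱ)
  have hf : memW ϱ (expCut r⁻¹) :=
    memW_iff.2 ⟨aestronglyMeasurable_expCut, by simp [wLInt_expCut hμ]⟩
  have hpos : 0 < wNorm ϱ (expCut r⁻¹) := by
    have hgap : 0 < (2 * (r⁻¹ - ϱ))⁻¹ := by have := sub_pos.2 hμ; positivity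
    rw [wNorm_eq hf.1, wLInt_expCut hμ, ENNReal.toReal_ofReal hgap.le]
    exact Real.sqrt_pos.2 hgap
  refine ⟨expCut r⁻¹, hf, ?_⟩
  calc c * wNorm ϱ (expCut r⁻¹) < r * wNorm ϱ (expCut r⁻¹) := mul_lt_mul_of_pos_right hcr hpos
    _ = √(ENNReal.ofReal r ^ 2 * wLInt ϱ (expCut r⁻¹)).toReal := by
        rw [sqrt_toReal_ofReal_sq_mul hr.le, wNorm_eq hf.1]
    _ ≤ √(wLInt ϱ (intOp (expCut r⁻¹))).toReal := by
        refine Real.sqrt_le_sqrt (ENNReal.toReal_mono (memW_iff.1 (memW_intOp hϱ hf)).2.ne ?_)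
        simpa using le_wLInt_intOp_expCut (ϱ := ϱ) (inv_pos.2 hr)
    _ = wNorm ϱ (intOp (expCut r⁻¹)) := (wNorm_eq (memW_intOp hϱ hf).1).symm

theorem stmt0 (ϱ : ℝ) (hϱ : 0 < ϱ) :
    (∀ f g : ℝ → ℂ, memW ϱ f → memW ϱ g →
      ∀ t : ℝ, intOp (f + g) t = intOp f t + intOp g t) ∧
    (∀ (c : ℂ) (f : ℝ → ℂ) (t : ℝ), intOp (c • f) t = c • intOp f t) ∧
    (∀ f : ℝ → ℂ, memW ϱ f →
      memW ϱ (intOp f) ∧ wNorm ϱ (intOp f) ≤ (1 / ϱ) * wNorm ϱ f) ∧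
    (∀ c : ℝ, 0 ≤ c → c < 1 / ϱ →
      ∃ f : ℝ → ℂ, memW ϱ f ∧ c * wNorm ϱ f < wNorm ϱ (intOp f)) :=
  ⟨fun _ _ hf hg t => integral_add (hf.integrableOn hϱ t) (hg.integrableOn hϱ t),
    fun c f _ => integral_smul c f,
    fun _ hf => ⟨memW_intOp hϱ hf, wNorm_intOp_le hϱ hf⟩,
    fun _ hc0 hc => exists_lt_wNorm_intOp hϱ hc0 hc⟩
end

section
/- Let ϱ < 0. Then the inverse of the shifted derivative, given by (∂_{0,ϱ}^{-1}f)(x) = -∫_x^∞ f(t) dt on H_{ϱ,0}(ℝ), is not causal. -/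
open MeasureTheory Real Set

/-- The anticausal antiderivative `(∂_{0,ϱ}^{-1} f)(x) = -∫_x^∞ f`. -/
noncomputable def antiOp (f : ℝ → ℂ) : ℝ → ℂ := fun x => -∫ s in Set.Ioi x, f s

/-- For ϱ < 0 the operator `antiOp` on `H_{ϱ,0}(ℝ)` is not causal. -/
theorem stmt9 (ϱ : ℝ) (hϱ : ϱ < 0) :
    ¬ (∀ (a : ℝ) (f g : ℝ → ℂ), memW ϱ f → memW ϱ g →
        (∀ᵐ t : ℝ ∂volume, t < a → f t = g t) →
        (∀ᵐ t : ℝ ∂volume, t < a → antiOp f t = antiOp g t)) := by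
  intro h
  set f : ℝ → ℂ := (Set.Icc (0:ℝ) 1).indicator (fun _ => (1:ℂ)) with hf
  have hmf : memW ϱ f := by
    constructor
    · exact (aestronglyMeasurable_indicator_iff measurableSet_Icc).mpr
        aestronglyMeasurable_const
    · have heq : (fun t : ℝ => ‖f t‖ ^ 2 * Real.exp (-2 * ϱ * t)) =
          (Set.Icc (0:ℝ) 1).indicator (fun t => Real.exp (-2 * ϱ * t)) := by
        funext t
        by_cases ht : t ∈ Set.Icc (0:ℝ) 1
        · simp [hf, Set.indicator_of_mem ht]
        · simp [hf, Set.indicator_of_notMem ht]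
      rw [heq, integrable_indicator_iff measurableSet_Icc]
      exact ((Real.continuous_exp.comp (by continuity)).continuousOn).integrableOn_compact
        isCompact_Icc
  have hmg : memW ϱ (fun _ => (0:ℂ)) := by
    constructor
    · exact aestronglyMeasurable_const
    · simp [integrable_zero]
  have hae : ∀ᵐ t : ℝ ∂volume, t < 0 → f t = (fun _ => (0:ℂ)) t := by
    filter_upwards with t ht
    simp [hf, Set.indicator_of_notMem (by simp; intro h0; linarith : t ∉ Set.Icc (0:ℝ) 1)]
  have hcon := h 0 f (fun _ => (0:ℂ)) hmf hmg hae
  have hval : ∀ t : ℝ, t < 0 → antiOp f t = -1 := by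
    intro t ht
    have : (∫ s in Set.Ioi t, f s) = ∫ s in Set.Ioi t ∩ Set.Icc 0 1, (1:ℂ) := by
      rw [hf, setIntegral_indicator measurableSet_Icc]
    have hinter : Set.Ioi t ∩ Set.Icc (0:ℝ) 1 = Set.Icc 0 1 := by
      apply Set.inter_eq_self_of_subset_right
      intro x hx
      exact lt_of_lt_of_le ht hx.1
    rw [antiOp, this, hinter]
    simp [Complex.ofReal_one]
  have hbad : ∀ᵐ t : ℝ ∂volume, ¬ t < 0 := by
    filter_upwards [hcon] with t h1
    intro hlt
    have := h1 hlt
    rw [hval t hlt] at this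
    simp [antiOp] at this
  rw [ae_iff] at hbad
  simp only [not_not] at hbad
  have h0 : volume (Set.Iio (0:ℝ)) = 0 := hbad
  rw [Real.volume_Iio] at h0
  exact absurd h0 (by simp)
end

section
/- Let H be a Hilbert space, ϱ > 0, and F, G : H_{ϱ,0}(ℝ; H) → H_{ϱ,0}(ℝ; H) Lipschitz with (|F|_Lip + |G|_Lip)/2 < ϱ. Let u, v ∈ H_{ϱ,0}(ℝ; H) satisfy u = I F(u) and v = I G(v), where I is integration from -∞. Then |u - v|_{ϱ,0} ≤ (ϱ - (|F|_Lip + |G|_Lip)/2)^{-1} sup_{x} |F(x) - G(x)|_{ϱ,0}. -/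
/-!
Multiplication by `e^{-ϱt}` (`weighted ϱ`) maps `H_{ϱ,0}(ℝ; H)` isometrically onto `L²(ℝ; H)` and
turns integration from `-∞` into convolution with the kernel `𝟙_{r > 0} e^{-ϱr}` (`expKernel ϱ`),
whose integral is `1/ϱ`. Young's inequality `‖k ⋆ h‖₂ ≤ ‖k‖₁ ‖h‖₂`, which follows from
Cauchy–Schwarz and Tonelli, therefore gives `|I w|_{ϱ,0} ≤ ϱ⁻¹ |w|_{ϱ,0}`.

With `d = |u - v|_{ϱ,0}` and `u - v = I (F u - G v)`, this yields `ϱ d ≤ |F u - G v|_{ϱ,0}`.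
By the triangle inequality through `F v`, resp. `G u`, the right side is at most `L_F d + S`,
resp. `S + L_G d`; averaging the two bounds gives `(ϱ - (L_F + L_G)/2) d ≤ S`.
-/

open MeasureTheory Real Set

open scoped ENNReal

section CauchySchwarz
variable {α : Type*} [MeasurableSpace α] {μ : Measure α}

theorem lintegral_mul_sq_le {k f : α → ℝ≥0∞} (hk : AEMeasurable k μ) (hf : AEMeasurable f μ) :
    (∫⁻ a, k a * f a ∂μ) ^ 2 ≤ (∫⁻ a, k a ∂μ) * ∫⁻ a, k a * f a ^ 2 ∂μ := by
  have sqrt_sq : ∀ x : ℝ≥0∞, (x ^ (2⁻¹ : ℝ)) ^ 2 = x := by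
    simpa using ENNReal.rpow_inv_natCast_pow (n := 2) two_ne_zero
  have split : ∀ a, k a ^ (2⁻¹ : ℝ) * (k a * f a ^ 2) ^ (2⁻¹ : ℝ) = k a * f a := by
    intro a
    rw [← ENNReal.mul_rpow_of_nonneg _ _ (by norm_num),
      show k a * (k a * f a ^ 2) = (k a * f a) ^ 2 by ring]
    simpa using ENNReal.pow_rpow_inv_natCast (n := 2) two_ne_zero (k a * f a)
  have holder := ENNReal.lintegral_mul_norm_pow_le (μ := μ) (f := k)
    (g := fun a => k a * f a ^ 2) hk (hk.mul (hf.pow_const 2)) (by norm_num : (0 : ℝ) ≤ 2⁻¹)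
    (by norm_num : (0 : ℝ) ≤ 2⁻¹) (by norm_num)
  simp only [split] at holder
  calc (∫⁻ a, k a * f a ∂μ) ^ 2
      ≤ ((∫⁻ a, k a ∂μ) ^ (2⁻¹ : ℝ) * (∫⁻ a, k a * f a ^ 2 ∂μ) ^ (2⁻¹ : ℝ)) ^ 2 := by
        gcongr
    _ = (∫⁻ a, k a ∂μ) * ∫⁻ a, k a * f a ^ 2 ∂μ := by rw [mul_pow, sqrt_sq, sqrt_sq]

end CauchySchwarz

section Young
variable {G : Type*} [MeasurableSpace G] [AddGroup G] [MeasurableAdd₂ G] [MeasurableNeg G]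
  {μ : Measure G} [SFinite μ] [μ.IsAddLeftInvariant]

theorem lintegral_lconvolution_sq_le {k h : G → ℝ≥0∞} (hk : AEMeasurable k μ)
    (hh : AEMeasurable h μ) :
    ∫⁻ x, (k ⋆ₗ[μ] h) x ^ 2 ∂μ ≤ (∫⁻ x, k x ∂μ) ^ 2 * ∫⁻ x, h x ^ 2 ∂μ := by
  have hshift : ∀ᵐ x ∂μ, AEMeasurable (fun y => h (-y + x)) μ :=
    (by fun_prop : AEMeasurable (fun p : G × G => h (-p.2 + p.1)) (μ.prod μ))
      |>.aestronglyMeasurable.prodMk_left.mono fun _ hx => hx.aemeasurable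
  have hprod : AEMeasurable (fun p : G × G => k p.2 * h (-p.2 + p.1) ^ 2) (μ.prod μ) := by
    fun_prop
  calc ∫⁻ x, (k ⋆ₗ[μ] h) x ^ 2 ∂μ
      ≤ ∫⁻ x, (∫⁻ y, k y ∂μ) * ∫⁻ y, k y * h (-y + x) ^ 2 ∂μ ∂μ :=
        lintegral_mono_ae (hshift.mono fun x hx => lintegral_mul_sq_le hk hx)
    _ = (∫⁻ y, k y ∂μ) * ∫⁻ y, ∫⁻ x, k y * h (-y + x) ^ 2 ∂μ ∂μ := by
        rw [lintegral_const_mul'' _ hprod.lintegral_prod_right', lintegral_lintegral_swap hprod]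
    _ = (∫⁻ x, k x ∂μ) ^ 2 * ∫⁻ x, h x ^ 2 ∂μ := by
        have inner : ∀ y, ∫⁻ x, k y * h (-y + x) ^ 2 ∂μ = k y * ∫⁻ x, h x ^ 2 ∂μ := fun y => by
          rw [lintegral_const_mul'' (f := fun x => h (-y + x) ^ 2) _
              ((hh.comp_quasiMeasurePreserving
                (measurePreserving_add_left μ (-y)).quasiMeasurePreserving).pow_const 2),
            lintegral_add_left_eq_self (fun x => h x ^ 2)]
        simp only [inner]
        rw [lintegral_mul_const'' _ hk, sq, mul_assoc]

end Young

noncomputable def weighted {H : Type*} [NormedAddCommGroup H] [NormedSpace ℝ H] (ϱ : ℝ)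
    (f : ℝ → H) : ℝ → H :=
  fun t => Real.exp (-ϱ * t) • f t

noncomputable def expKernel (ϱ : ℝ) : ℝ → ℝ≥0∞ :=
  (Ioi 0).indicator fun r => ENNReal.ofReal (Real.exp (-ϱ * r))

theorem eLpNorm_two_sq {α ε : Type*} [MeasurableSpace α] [ENorm ε] (f : α → ε) (μ : Measure α) :
    eLpNorm f 2 μ ^ 2 = ∫⁻ x, ‖f x‖ₑ ^ 2 ∂μ := by
  simpa using eLpNorm_nnreal_pow_eq_lintegral (f := f) (μ := μ) (p := 2) two_ne_zero

theorem lintegral_expKernel {ϱ : ℝ} (hϱ : 0 < ϱ) : ∫⁻ r, expKernel ϱ r = ENNReal.ofReal ϱ⁻¹ := by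
  have hneg : -ϱ < 0 := neg_neg_of_pos hϱ
  rw [expKernel, lintegral_indicator measurableSet_Ioi,
    ← ofReal_integral_eq_lintegral_ofReal (integrableOn_exp_mul_Ioi hneg 0)
      (ae_of_all _ fun _ => (Real.exp_pos _).le),
    integral_exp_mul_Ioi hneg 0]
  simp

theorem measurable_expKernel (ϱ : ℝ) : Measurable (expKernel ϱ) :=
  (by fun_prop : Measurable fun r : ℝ => ENNReal.ofReal (Real.exp (-ϱ * r))).indicator
    measurableSet_Ioi

section WeightedSpace
variable {H : Type*} [NormedAddCommGroup H] [NormedSpace ℝ H] {ϱ : ℝ} {f g w : ℝ → H}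

theorem norm_weighted_sq (ϱ : ℝ) (f : ℝ → H) (t : ℝ) :
    ‖weighted ϱ f t‖ ^ 2 = ‖f t‖ ^ 2 * Real.exp (-2 * ϱ * t) := by
  rw [weighted, norm_smul, Real.norm_of_nonneg (Real.exp_pos _).le, mul_pow, ← Real.exp_nat_mul,
    mul_comm]
  ring_nf

theorem weighted_sub (ϱ : ℝ) (f g : ℝ → H) :
    weighted ϱ (fun t => f t - g t) = weighted ϱ f - weighted ϱ g := by
  ext t
  simp only [weighted, Pi.sub_apply, smul_sub]

theorem MeasureTheory.AEStronglyMeasurable.weighted (hf : AEStronglyMeasurable f volume) :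
    AEStronglyMeasurable (weighted ϱ f) volume :=
  (Real.continuous_exp.comp (continuous_const.mul continuous_id)).aestronglyMeasurable.smul hf

theorem memW_iff_memLp_weighted (hf : AEStronglyMeasurable f volume) :
    memW ϱ f ↔ MemLp (weighted ϱ f) 2 volume := by
  rw [memLp_two_iff_integrable_sq_norm hf.weighted]
  simp only [memW, norm_weighted_sq, hf, true_and]

theorem memW.sub (hf : memW ϱ f) (hg : memW ϱ g) : memW ϱ (fun t => f t - g t) := by
  rw [memW_iff_memLp_weighted (f := fun t => f t - g t) (hf.1.sub hg.1), weighted_sub]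
  exact ((memW_iff_memLp_weighted hf.1).1 hf).sub ((memW_iff_memLp_weighted hg.1).1 hg)

theorem wNorm_eq_lpNorm (hf : AEStronglyMeasurable f volume) :
    wNorm ϱ f = lpNorm (weighted ϱ f) 2 volume := by
  rw [show (2 : ℝ≥0∞) = ((2 : NNReal) : ℝ≥0∞) from rfl,
    lpNorm_nnreal_eq_integral_norm_rpow two_ne_zero hf.weighted, wNorm, wInt,
    Real.sqrt_eq_rpow]
  simp [norm_weighted_sq]

theorem wNorm_sub_le (hf : memW ϱ f) (hg : memW ϱ g) {h : ℝ → H}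
    (hh : AEStronglyMeasurable h volume) :
    wNorm ϱ (fun t => f t - h t) ≤
      wNorm ϱ (fun t => f t - g t) + wNorm ϱ (fun t => g t - h t) := by
  rw [wNorm_eq_lpNorm (f := fun t => f t - h t) (hf.1.sub hh),
    wNorm_eq_lpNorm (f := fun t => f t - g t) (hf.1.sub hg.1),
    wNorm_eq_lpNorm (f := fun t => g t - h t) (hg.1.sub hh), weighted_sub, weighted_sub,
    weighted_sub]
  exact lpNorm_sub_le_lpNorm_sub_add_lpNorm_sub ((memW_iff_memLp_weighted hf.1).1 hf)
    ((memW_iff_memLp_weighted hg.1).1 hg) one_le_two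

theorem memW.integrableOn_Iio (hϱ : 0 < ϱ) (hf : memW ϱ f) (c : ℝ) :
    IntegrableOn f (Iio c) volume := by
  have hexp : MemLp (fun s => Real.exp (ϱ * s)) 2 (volume.restrict (Iio c)) := by
    refine (memLp_two_iff_integrable_sq (by fun_prop)).2 ?_
    refine ((integrableOn_exp_mul_Iic (by positivity : 0 < 2 * ϱ) c).mono_set
      Iio_subset_Iic_self).congr_fun (fun s _ => ?_) measurableSet_Iio
    rw [← Real.exp_nat_mul]
    ring_nf
  have hprod := (((memW_iff_memLp_weighted hf.1).1 hf).restrict (Iio c)).smul (r := 1) hexp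
  rw [memLp_one_iff_integrable] at hprod
  refine hprod.congr (ae_of_all _ fun s => ?_)
  simp [weighted, smul_smul, ← Real.exp_add]

theorem enorm_weighted_integral_Iio_le (w : ℝ → H) (t : ℝ) :
    ‖weighted ϱ (fun t => ∫ s in Iio t, w s) t‖ₑ ≤
      (expKernel ϱ ⋆ₗ fun s => ‖weighted ϱ w s‖ₑ) t := by
  have mul_kernel : ∀ s, ‖weighted ϱ w s‖ₑ * expKernel ϱ (-s + t) =
      (Iio t).indicator (fun s => ENNReal.ofReal (Real.exp (-ϱ * t)) * ‖w s‖ₑ) s := by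
    intro s
    by_cases hst : s < t
    · rw [expKernel, indicator_of_mem (mem_Ioi.2 (by linarith)),
        indicator_of_mem (mem_Iio.2 hst), weighted, enorm_smul,
        Real.enorm_of_nonneg (Real.exp_pos _).le, mul_right_comm,
        ← ENNReal.ofReal_mul (Real.exp_pos _).le, ← Real.exp_add]
      ring_nf
    · simp [expKernel, hst]
  calc ‖weighted ϱ (fun t => ∫ s in Iio t, w s) t‖ₑ
      = ENNReal.ofReal (Real.exp (-ϱ * t)) * ‖∫ s in Iio t, w s‖ₑ := by
        rw [weighted, enorm_smul, Real.enorm_of_nonneg (Real.exp_pos _).le]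
    _ ≤ ENNReal.ofReal (Real.exp (-ϱ * t)) * ∫⁻ s in Iio t, ‖w s‖ₑ := by
        gcongr
        exact enorm_integral_le_lintegral_enorm _
    _ = (expKernel ϱ ⋆ₗ fun s => ‖weighted ϱ w s‖ₑ) t := by
        rw [lconvolution_comm, lconvolution_def, lintegral_congr mul_kernel,
          lintegral_indicator measurableSet_Iio, lintegral_const_mul' _ _ ENNReal.ofReal_ne_top]

theorem eLpNorm_weighted_integral_Iio_le (hϱ : 0 < ϱ) (hw : AEStronglyMeasurable w volume) :
    eLpNorm (weighted ϱ (fun t => ∫ s in Iio t, w s)) 2 volume ≤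
      ENNReal.ofReal ϱ⁻¹ * eLpNorm (weighted ϱ w) 2 volume := by
  calc eLpNorm (weighted ϱ (fun t => ∫ s in Iio t, w s)) 2 volume
      ≤ eLpNorm (expKernel ϱ ⋆ₗ fun s => ‖weighted ϱ w s‖ₑ) 2 volume :=
        eLpNorm_mono_enorm fun t =>
          (enorm_weighted_integral_Iio_le w t).trans_eq (enorm_eq_self _).symm
    _ ≤ ENNReal.ofReal ϱ⁻¹ * eLpNorm (weighted ϱ w) 2 volume := by
        rw [← ENNReal.pow_le_pow_left_iff two_ne_zero, mul_pow, eLpNorm_two_sq, eLpNorm_two_sq,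
          ← lintegral_expKernel hϱ]
        simpa only [enorm_eq_self] using
          lintegral_lconvolution_sq_le (measurable_expKernel ϱ).aemeasurable hw.weighted.enorm

theorem wNorm_le_of_ae_eq_integral_Iio (hϱ : 0 < ϱ) (hf : AEStronglyMeasurable f volume)
    (hw : memW ϱ w) (hfw : ∀ᵐ t, f t = ∫ s in Iio t, w s) :
    wNorm ϱ f ≤ ϱ⁻¹ * wNorm ϱ w := by
  have hW : weighted ϱ f =ᵐ[volume] weighted ϱ (fun t => ∫ s in Iio t, w s) := by
    filter_upwards [hfw] with t ht
    simp only [weighted, ht]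
  rw [wNorm_eq_lpNorm hf, wNorm_eq_lpNorm hw.1, ← toReal_eLpNorm hf.weighted,
    ← toReal_eLpNorm hw.1.weighted, eLpNorm_congr_ae hW,
    ← ENNReal.toReal_ofReal (inv_nonneg.2 hϱ.le), ← ENNReal.toReal_mul]
  exact ENNReal.toReal_mono
    (ENNReal.mul_ne_top ENNReal.ofReal_ne_top
      ((memW_iff_memLp_weighted hw.1).1 hw).eLpNorm_ne_top)
    (eLpNorm_weighted_integral_Iio_le hϱ hw.1)

end WeightedSpace

theorem stmt10_general {H : Type*} [NormedAddCommGroup H] [InnerProductSpace ℂ H]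
    (ϱ LF LG S : ℝ) (hϱ : 0 < ϱ)
    (hsum : (LF + LG) / 2 < ϱ)
    (F G : (ℝ → H) → (ℝ → H))
    (hFmap : ∀ x, memW ϱ x → memW ϱ (F x))
    (hGmap : ∀ x, memW ϱ x → memW ϱ (G x))
    (hFlip : ∀ x y, memW ϱ x → memW ϱ y →
      wNorm ϱ (fun t => F x t - F y t) ≤ LF * wNorm ϱ (fun t => x t - y t))
    (hGlip : ∀ x y, memW ϱ x → memW ϱ y →
      wNorm ϱ (fun t => G x t - G y t) ≤ LG * wNorm ϱ (fun t => x t - y t))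
    (hS : ∀ x, memW ϱ x → wNorm ϱ (fun t => F x t - G x t) ≤ S)
    (u v : ℝ → H) (hu : memW ϱ u) (hv : memW ϱ v)
    (hufix : ∀ᵐ t : ℝ ∂volume, u t = ∫ s in Set.Iio t, F u s)
    (hvfix : ∀ᵐ t : ℝ ∂volume, v t = ∫ s in Set.Iio t, G v s) :
    wNorm ϱ (fun t => u t - v t) ≤ (ϱ - (LF + LG) / 2)⁻¹ * S := by
  have hFu := hFmap u hu
  have hGv := hGmap v hv
  have h_integral : wNorm ϱ (fun t => u t - v t) ≤ ϱ⁻¹ * wNorm ϱ (fun t => F u t - G v t) := by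
    refine wNorm_le_of_ae_eq_integral_Iio hϱ (hu.1.sub hv.1) (hFu.sub hGv) ?_
    filter_upwards [hufix, hvfix] with t hut hvt
    rw [hut, hvt, integral_sub (hFu.integrableOn_Iio hϱ t) (hGv.integrableOn_Iio hϱ t)]
  have h_via_F : wNorm ϱ (fun t => F u t - G v t) ≤
      LF * wNorm ϱ (fun t => u t - v t) + S :=
    (wNorm_sub_le hFu (hFmap v hv) hGv.1).trans (add_le_add (hFlip u v hu hv) (hS v hv))
  have h_via_G : wNorm ϱ (fun t => F u t - G v t) ≤
      S + LG * wNorm ϱ (fun t => u t - v t) :=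
    (wNorm_sub_le hFu (hGmap u hu) hGv.1).trans (add_le_add (hS u hu) (hGlip u v hu hv))
  rw [le_inv_mul_iff₀ hϱ] at h_integral
  rw [inv_mul_eq_div, le_div_iff₀ (by linarith)]
  linarith

/-- Continuous dependence on the right-hand side for fixed points of `u = ∫_{-∞}^· F(u)`. -/
theorem stmt10 {H : Type*} [NormedAddCommGroup H] [InnerProductSpace ℂ H] [CompleteSpace H]
    (ϱ LF LG S : ℝ) (hϱ : 0 < ϱ) (hLF : 0 ≤ LF) (hLG : 0 ≤ LG)
    (hsum : (LF + LG) / 2 < ϱ)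
    (F G : (ℝ → H) → (ℝ → H))
    (hFmap : ∀ x, memW ϱ x → memW ϱ (F x))
    (hGmap : ∀ x, memW ϱ x → memW ϱ (G x))
    (hFlip : ∀ x y, memW ϱ x → memW ϱ y →
      wNorm ϱ (fun t => F x t - F y t) ≤ LF * wNorm ϱ (fun t => x t - y t))
    (hGlip : ∀ x y, memW ϱ x → memW ϱ y →
      wNorm ϱ (fun t => G x t - G y t) ≤ LG * wNorm ϱ (fun t => x t - y t))
    (hS : ∀ x, memW ϱ x → wNorm ϱ (fun t => F x t - G x t) ≤ S)
    (u v : ℝ → H) (hu : memW ϱ u) (hv : memW ϱ v)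
    (hufix : ∀ᵐ t : ℝ ∂volume, u t = ∫ s in Set.Iio t, F u s)
    (hvfix : ∀ᵐ t : ℝ ∂volume, v t = ∫ s in Set.Iio t, G v s) :
    wNorm ϱ (fun t => u t - v t) ≤ (ϱ - (LF + LG) / 2)⁻¹ * S :=
  stmt10_general ϱ LF LG S hϱ hsum F G hFmap hGmap hFlip hGlip hS u v hu hv hufix hvfix
end

section
/- Let α : ℝ → ℝ be bijective and absolutely continuous with |α'| ≤ M a.e. and α(s) ≥ s for all s. Then for every ϱ > 0 the composition operator u ↦ u ∘ α^{-1} is bounded on H_{ϱ,0}(ℝ) with operator norm at most √M. -/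
open MeasureTheory Real Set

/-!
Substituting `t = α s`, the squared weighted norm of `u ∘ α⁻¹` is `∫ |u s|² e^{-2ϱ α(s)} dα(s)`.
A `K`-Lipschitz map enlarges Lebesgue measure by at most the factor `K`, so `dα(s) ≤ K ds`,
and `α(s) ≥ s` together with `ϱ ≥ 0` gives `e^{-2ϱ α(s)} ≤ e^{-2ϱ s}`.
-/

open scoped ENNReal NNReal

noncomputable def MeasurableEmbedding.equivOfSurjective {α β : Type*} [MeasurableSpace α]
    [MeasurableSpace β] {f : α → β} (hf : MeasurableEmbedding f) (hs : Function.Surjective f) :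
    α ≃ᵐ β where
  toEquiv := Equiv.ofBijective f ⟨hf.injective, hs⟩
  measurable_toFun := hf.measurable
  measurable_invFun s hs' := by
    rw [← Equiv.image_eq_preimage_symm]
    exact hf.measurableSet_image.2 hs'

theorem LipschitzWith.volume_image_le {K : ℝ≥0} {f : ℝ → ℝ} (hf : LipschitzWith K f)
    (s : Set ℝ) : volume (f '' s) ≤ K * volume s := by
  simpa only [hausdorffMeasure_real, ENNReal.rpow_one]
    using hf.hausdorffMeasure_image_le zero_le_one s

section ChangeOfVariables

variable {K : ℝ≥0} (e : ℝ ≃ᵐ ℝ) (he : LipschitzWith K e)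
include he

theorem map_symm_volume_le_of_lipschitzWith : volume.map e.symm ≤ (K : ℝ≥0∞) • volume :=
  Measure.le_iff'.2 fun s => by
    rw [e.symm.map_apply, ← MeasurableEquiv.image_eq_preimage_symm]
    exact he.volume_image_le s

theorem lintegral_comp_symm_le_of_lipschitzWith (F : ℝ → ℝ≥0∞) :
    ∫⁻ t, F (e.symm t) ≤ K * ∫⁻ s, F s :=
  calc ∫⁻ t, F (e.symm t) = ∫⁻ s, F s ∂volume.map e.symm := (lintegral_map_equiv F e.symm).symm
    _ ≤ ∫⁻ s, F s ∂((K : ℝ≥0∞) • volume) :=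
      lintegral_mono' (map_symm_volume_le_of_lipschitzWith e he) le_rfl
    _ = K * ∫⁻ s, F s := lintegral_smul_measure _ _

theorem quasiMeasurePreserving_symm_of_lipschitzWith :
    Measure.QuasiMeasurePreserving e.symm volume volume :=
  ⟨e.symm.measurable,
    Measure.absolutelyContinuous_of_le_smul (map_symm_volume_le_of_lipschitzWith e he)⟩

end ChangeOfVariables

section WeightedSpace

variable {H : Type*} [NormedAddCommGroup H] {ϱ : ℝ}

theorem memW_of_lintegral_lt_top {f : ℝ → H} (hf : AEStronglyMeasurable f volume)
    (hfin : ∫⁻ t, ENNReal.ofReal (‖f t‖ ^ 2 * Real.exp (-2 * ϱ * t)) < ∞) : memW ϱ f := by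
  refine ⟨hf, (hf.norm.pow 2).mul (by fun_prop : Continuous _).aestronglyMeasurable, ?_⟩
  rwa [hasFiniteIntegral_iff_ofReal (Filter.Eventually.of_forall fun t => by positivity)]

theorem ofReal_wInt {f : ℝ → H} (hf : memW ϱ f) :
    ENNReal.ofReal (wInt ϱ f) = ∫⁻ t, ENNReal.ofReal (‖f t‖ ^ 2 * Real.exp (-2 * ϱ * t)) :=
  ofReal_integral_eq_lintegral_ofReal hf.2 (Filter.Eventually.of_forall fun t => by positivity)

variable {K : ℝ≥0} (e : ℝ ≃ᵐ ℝ) (he : LipschitzWith K e) (hle : ∀ s, s ≤ e s) (hϱ : 0 ≤ ϱ)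
include he hle hϱ

theorem lintegral_weighted_comp_symm_le (u : ℝ → H) :
    ∫⁻ t, ENNReal.ofReal (‖u (e.symm t)‖ ^ 2 * Real.exp (-2 * ϱ * t)) ≤
      K * ∫⁻ t, ENNReal.ofReal (‖u t‖ ^ 2 * Real.exp (-2 * ϱ * t)) := by
  calc ∫⁻ t, ENNReal.ofReal (‖u (e.symm t)‖ ^ 2 * Real.exp (-2 * ϱ * t))
      = ∫⁻ t, ENNReal.ofReal (‖u (e.symm t)‖ ^ 2 * Real.exp (-2 * ϱ * e (e.symm t))) := by
        simp only [MeasurableEquiv.apply_symm_apply]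
    _ ≤ K * ∫⁻ s, ENNReal.ofReal (‖u s‖ ^ 2 * Real.exp (-2 * ϱ * e s)) :=
        lintegral_comp_symm_le_of_lipschitzWith e he _
    _ ≤ K * ∫⁻ s, ENNReal.ofReal (‖u s‖ ^ 2 * Real.exp (-2 * ϱ * s)) := by
        gcongr _ * ∫⁻ s, ENNReal.ofReal (_ * Real.exp ?_) with s
        nlinarith [hle s]

theorem memW_comp_symm {u : ℝ → H} (hu : memW ϱ u) : memW ϱ (fun t => u (e.symm t)) :=
  memW_of_lintegral_lt_top
    (hu.1.comp_quasiMeasurePreserving (quasiMeasurePreserving_symm_of_lipschitzWith e he))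
    ((lintegral_weighted_comp_symm_le e he hle hϱ u).trans_lt
      (ENNReal.mul_lt_top ENNReal.coe_lt_top hu.2.lintegral_lt_top))

theorem wNorm_comp_symm_le {u : ℝ → H} (hu : memW ϱ u) :
    wNorm ϱ (fun t => u (e.symm t)) ≤ √(K : ℝ) * wNorm ϱ u := by
  have hwInt : wInt ϱ (fun t => u (e.symm t)) ≤ K * wInt ϱ u := by
    have hu_nonneg : 0 ≤ wInt ϱ u := integral_nonneg fun t => by positivity
    rw [← ENNReal.ofReal_le_ofReal_iff (by positivity), ENNReal.ofReal_mul K.coe_nonneg,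
      ENNReal.ofReal_coe_nnreal, ofReal_wInt hu, ofReal_wInt (memW_comp_symm e he hle hϱ hu)]
    exact lintegral_weighted_comp_symm_le e he hle hϱ u
  rw [wNorm, wNorm, ← Real.sqrt_mul K.coe_nonneg]
  exact Real.sqrt_le_sqrt hwInt

end WeightedSpace

theorem stmt16_general (M ϱ : ℝ) (α : ℝ → ℝ)
    (hbij : Function.Bijective α) (hlip : LipschitzWith (Real.toNNReal M) α)
    (hα : ∀ s : ℝ, s ≤ α s) (hϱ : 0 < ϱ) :
    ∀ u : ℝ → ℂ, memW ϱ u →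
      memW ϱ (fun t => u (Function.invFun α t)) ∧
      wNorm ϱ (fun t => u (Function.invFun α t)) ≤ Real.sqrt M * wNorm ϱ u := by
  intro u hu
  let e := (hlip.continuous.measurableEmbedding hbij.1).equivOfSurjective hbij.2
  have hinv : Function.invFun α = e.symm :=
    funext fun t => hbij.1 <| (Function.rightInverse_invFun hbij.2 t).trans
      (e.apply_symm_apply t).symm
  have hsqrt : √M = √(M.toNNReal : ℝ) := by simp only [Real.sqrt, Real.toNNReal_coe]
  rw [hinv, hsqrt]
  exact ⟨memW_comp_symm e hlip hα hϱ.le hu, wNorm_comp_symm_le e hlip hα hϱ.le hu⟩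

/-- Composition with `α⁻¹`, for `α` bijective, Lipschitz (equivalently absolutely
continuous with `|α'| ≤ M` a.e.) and `α(s) ≥ s`, is bounded on `H_{ϱ,0}(ℝ)` with
norm at most `√M`. -/
theorem stmt16 (M ϱ : ℝ) (hM : 0 ≤ M) (α : ℝ → ℝ)
    (hbij : Function.Bijective α) (hlip : LipschitzWith (Real.toNNReal M) α)
    (hα : ∀ s : ℝ, s ≤ α s) (hϱ : 0 < ϱ) :
    ∀ u : ℝ → ℂ, memW ϱ u →
      memW ϱ (fun t => u (Function.invFun α t)) ∧
      wNorm ϱ (fun t => u (Function.invFun α t)) ≤ Real.sqrt M * wNorm ϱ u :=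
  stmt16_general M ϱ α hbij hlip hα hϱ
end

section
/- Let β : ℝ → ℝ be bijective and absolutely continuous with |β'| ≤ M a.e. and β(s) ≥ s + ε₀ for some ε₀ > 0 and all s. Then for every ϱ > 0 the composition operator u ↦ u ∘ β^{-1} on H_{ϱ,0}(ℝ) has operator norm at most √M · e^{-ϱε₀}; in particular its norm tends to 0 as ϱ → ∞. -/
open MeasureTheory Real Set

open scoped ENNReal NNReal in
/-- Composition with `β⁻¹`, for `β` bijective, Lipschitz with `|β'| ≤ M` a.e. and
`β(s) ≥ s + ε₀`, has norm at most `√M · e^{-ϱε₀}` on `H_{ϱ,0}(ℝ)`. -/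
theorem stmt17 (M ϱ ε₀ : ℝ) (hM : 0 ≤ M) (hε₀ : 0 < ε₀) (β : ℝ → ℝ)
    (hbij : Function.Bijective β) (hlip : LipschitzWith (Real.toNNReal M) β)
    (hβ : ∀ s : ℝ, s + ε₀ ≤ β s) (hϱ : 0 < ϱ) :
    ∀ u : ℝ → ℂ, memW ϱ u →
      memW ϱ (fun t => u (Function.invFun β t)) ∧
      wNorm ϱ (fun t => u (Function.invFun β t)) ≤
        Real.sqrt M * Real.exp (-ϱ * ε₀) * wNorm ϱ u := by
  intro u hu
  obtain ⟨humeas, huint⟩ := hu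
  have hinj := hbij.injective
  have hsurj := hbij.surjective
  have hcont : Continuous β := hlip.continuous
  -- β is strictly monotone
  have hmono : StrictMono β := by
    rcases hcont.strictMono_of_inj hinj with h | h
    · exact h
    · exfalso
      obtain ⟨n, hn⟩ := exists_nat_gt (β 0 - ε₀)
      have h1 : β (n : ℝ) ≤ β 0 := by
        rcases eq_or_lt_of_le (Nat.cast_nonneg n : (0:ℝ) ≤ n) with h0 | h0
        · rw [← h0]
        · exact (h h0).le
      have := hβ (n : ℝ)
      linarith
  set e := StrictMono.orderIsoOfSurjective β hmono hsurj with he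
  have hβe : ∀ s, e s = β s := fun s => rfl
  have hinv : Function.invFun β = ⇑e.symm := by
    funext t
    apply hinj
    rw [Function.invFun_eq (hsurj t)]
    exact (StrictMono.orderIsoOfSurjective_self_symm_apply β hmono hsurj t).symm
  have hcontinv : Continuous (Function.invFun β) := by
    rw [hinv]; exact OrderIso.continuous e.symm
  have hmeas_inv : Measurable (Function.invFun β) := hcontinv.measurable
  have hright : ∀ t, β (Function.invFun β t) = t := fun t => Function.invFun_eq (hsurj t)
  have hleft : ∀ s, Function.invFun β (β s) = s := fun s => hinj (hright (β s))
  set c : ℝ≥0∞ := (Real.toNNReal M : ℝ≥0∞) with hc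
  -- image measure bound
  have himg : ∀ s : Set ℝ, volume (β '' s) ≤ c * volume s := by
    intro s
    have h := hlip.hausdorffMeasure_image_le (d := 1) zero_le_one s
    rw [hausdorffMeasure_real] at h
    simpa using h
  set ν : Measure ℝ := volume.map (Function.invFun β) with hν
  have hν_le : ν ≤ c • (volume : Measure ℝ) := by
    refine Measure.le_iff.2 fun s hs => ?_
    rw [hν, Measure.map_apply hmeas_inv hs]
    have : Function.invFun β ⁻¹' s = β '' s := by
      ext x
      constructor
      · intro hx
        exact ⟨Function.invFun β x, hx, hright x⟩
      · rintro ⟨a, ha, rfl⟩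
        rwa [Set.mem_preimage, hleft]
    rw [this]
    simpa using himg s
  have hac : ν ≪ (volume : Measure ℝ) :=
    (Measure.absolutelyContinuous_of_le hν_le).trans (Measure.smul_absolutelyContinuous)
  have hqmp : Measure.QuasiMeasurePreserving (Function.invFun β) volume volume :=
    ⟨hmeas_inv, hac⟩
  have hcomp_meas : AEStronglyMeasurable (fun t => u (Function.invFun β t)) volume :=
    humeas.comp_quasiMeasurePreserving hqmp
  -- volume = ν.map β
  have hmapβ : (volume : Measure ℝ) = ν.map β := by
    rw [hν, Measure.map_map hcont.measurable hmeas_inv]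
    have : β ∘ Function.invFun β = id := funext hright
    rw [this, Measure.map_id]
  -- lintegral setup
  set G : ℝ → ℝ≥0∞ := fun s => ENNReal.ofReal (‖u s‖ ^ 2 * Real.exp (-2 * ϱ * s)) with hG
  set F : ℝ → ℝ≥0∞ := fun t =>
    ENNReal.ofReal (‖u (Function.invFun β t)‖ ^ 2 * Real.exp (-2 * ϱ * t)) with hF
  have hGmeas : AEMeasurable G volume := by
    apply ENNReal.measurable_ofReal.comp_aemeasurable
    exact (humeas.norm.aemeasurable.pow_const 2).mul
      (Real.measurable_exp.comp (measurable_const.mul measurable_id)).aemeasurable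
  have hFmeas : AEMeasurable F volume := by
    apply ENNReal.measurable_ofReal.comp_aemeasurable
    exact (hcomp_meas.norm.aemeasurable.pow_const 2).mul
      (Real.measurable_exp.comp (measurable_const.mul measurable_id)).aemeasurable
  have hI : ∫⁻ s, G s < ⊤ := by
    have := huint.2
    rwa [hasFiniteIntegral_iff_ofReal (Filter.Eventually.of_forall fun s => by positivity)]
      at this
  -- the key estimate on lintegrals
  set k : ℝ≥0∞ := ENNReal.ofReal (Real.exp (-2 * ϱ * ε₀)) with hk
  have hkey : ∫⁻ t, F t ≤ k * c * ∫⁻ s, G s := by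
    have h1 : ∫⁻ t, F t ∂volume = ∫⁻ s, F (β s) ∂ν := by
      rw [hmapβ]
      refine lintegral_map' ?_ hcont.measurable.aemeasurable
      rwa [← hmapβ]
    rw [h1]
    have h2 : ∀ s, F (β s) ≤ k * G s := by
      intro s
      rw [hF, hG, hk]
      simp only [hleft]
      rw [← ENNReal.ofReal_mul (Real.exp_nonneg _)]
      apply ENNReal.ofReal_le_ofReal
      have hexp : Real.exp (-2 * ϱ * β s) ≤ Real.exp (-2 * ϱ * ε₀) * Real.exp (-2 * ϱ * s) := by
        rw [← Real.exp_add]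
        apply Real.exp_le_exp.2
        have := hβ s
        nlinarith
      calc ‖u s‖ ^ 2 * Real.exp (-2 * ϱ * β s)
          ≤ ‖u s‖ ^ 2 * (Real.exp (-2 * ϱ * ε₀) * Real.exp (-2 * ϱ * s)) := by
            apply mul_le_mul_of_nonneg_left hexp (by positivity)
        _ = Real.exp (-2 * ϱ * ε₀) * (‖u s‖ ^ 2 * Real.exp (-2 * ϱ * s)) := by ring
    calc ∫⁻ s, F (β s) ∂ν ≤ ∫⁻ s, k * G s ∂ν := lintegral_mono h2
      _ ≤ ∫⁻ s, k * G s ∂(c • volume) := lintegral_mono' hν_le le_rfl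
      _ = c * ∫⁻ s, k * G s ∂volume := lintegral_smul_measure c _
      _ = c * (k * ∫⁻ s, G s ∂volume) := by
          rw [lintegral_const_mul' k _ ENNReal.ofReal_ne_top]
      _ = k * c * ∫⁻ s, G s := by ring
    -- done hkey
  have hkc : k * c ≠ ⊤ := by
    rw [hk, hc]
    exact ENNReal.mul_ne_top ENNReal.ofReal_ne_top ENNReal.coe_ne_top
  have hJ : ∫⁻ t, F t < ⊤ := lt_of_le_of_lt hkey (ENNReal.mul_lt_top hkc.lt_top hI)
  have hcompsm : AEStronglyMeasurable
      (fun t => ‖u (Function.invFun β t)‖ ^ 2 * Real.exp (-2 * ϱ * t)) volume :=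
    ((hcomp_meas.norm.aemeasurable.pow_const 2).mul
      (Real.measurable_exp.comp (measurable_const.mul measurable_id)).aemeasurable).aestronglyMeasurable
  have hcompint : Integrable
      (fun t => ‖u (Function.invFun β t)‖ ^ 2 * Real.exp (-2 * ϱ * t)) := by
    refine ⟨hcompsm, ?_⟩
    rwa [hasFiniteIntegral_iff_ofReal (Filter.Eventually.of_forall fun t => by positivity)]
  refine ⟨⟨hcomp_meas, hcompint⟩, ?_⟩
  -- now the norm estimate
  have hwcomp : wInt ϱ (fun t => u (Function.invFun β t)) = (∫⁻ t, F t).toReal := by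
    rw [wInt, integral_eq_lintegral_of_nonneg_ae
      (Filter.Eventually.of_forall fun t => by positivity) hcompsm]
  have hwu : wInt ϱ u = (∫⁻ s, G s).toReal := by
    rw [wInt, integral_eq_lintegral_of_nonneg_ae
      (Filter.Eventually.of_forall fun s => by positivity) huint.1]
  have hreal : wInt ϱ (fun t => u (Function.invFun β t)) ≤
      Real.exp (-2 * ϱ * ε₀) * M * wInt ϱ u := by
    rw [hwcomp, hwu]
    have := ENNReal.toReal_mono (ENNReal.mul_ne_top hkc hI.ne) hkey
    rw [ENNReal.toReal_mul, ENNReal.toReal_mul] at this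
    have hck : k.toReal = Real.exp (-2 * ϱ * ε₀) := ENNReal.toReal_ofReal (Real.exp_nonneg _)
    have hcc : c.toReal = M := by
      rw [hc]; simp [Real.toNNReal_of_nonneg hM]
    rwa [hck, hcc] at this
  -- pass to square roots
  rw [wNorm, wNorm]
  calc Real.sqrt (wInt ϱ (fun t => u (Function.invFun β t)))
      ≤ Real.sqrt (Real.exp (-2 * ϱ * ε₀) * M * wInt ϱ u) := Real.sqrt_le_sqrt hreal
    _ = Real.sqrt M * Real.exp (-ϱ * ε₀) * Real.sqrt (wInt ϱ u) := by
        rw [Real.sqrt_mul (by positivity), Real.sqrt_mul (Real.exp_nonneg _)]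
        have : Real.exp (-2 * ϱ * ε₀) = Real.exp (-ϱ * ε₀) ^ 2 := by
          rw [← Real.exp_nat_mul]; ring_nf
        rw [this, Real.sqrt_sq (Real.exp_nonneg _)]
        ring
end
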